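/- arXiv:2202.02045 — 3 statements merged into one kernel-verified Lean document; each statement's English description precedes it below -/
import Mathlib

section
/- Let u be a C^2 function on the region |x| > |t| of R^{1+d} and define v(s,y) = (|y|^2 - s^2)^{-(d-1)/2} u(s/(|y|^2 - s^2), y/(|y|^2 - s^2)) on |y| > |s|. Then □_{t,x} u, evaluated at the corresponding point, equals (|y|+s)^{(d+3)/2} (|y|-s)^{(d+3)/2} □_{s,y} v(s,y). In particular, if □_{t,x} u = |u|^{4/(d-2)} u, then □_{s,y} v = (|y|^2 - s^2)^{2/(d-2)} |v|^{4/(d-2)} v. -/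
/-!
Write `⟪p, q⟫ = y·y' - s s'` for the Lorentz form on `ℝ × ℝᵈ`, so that the inversion is
`p ↦ p / ⟪p, p⟫` and `v = ⟪p, p⟫^α · u ∘ inversion` with `α = -(d-1)/2`. Along a line `p + τ w`
the quantity `⟪p + τw, p + τw⟫` is a quadratic polynomial in `τ`, and the chain rule writes the
second derivative of `v` in direction `w` as `⟪p, p⟫^(α-2)` times
`D²u(w, w) + ⟪p, w⟫ ℓ(w) + ⟪p, w⟫² a + ⟪w, w⟫ b` for a linear form `ℓ` and scalars `a`, `b`.
Taking the Minkowski trace `f(e₀) - ∑ f(eᵢ)`, the last three terms contribute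
`-ℓ(p) - ⟪p, p⟫ a - (d+1) b`, which vanishes exactly for the conformal weight `α = -(d-1)/2`.
Hence `□v = ⟪p, p⟫^(α-2) · (□u) ∘ inversion`, and both claims are rpow arithmetic.
-/

/-- Second derivative of `f` at `p` in direction `v`. -/
noncomputable def dirDeriv2 {d : ℕ} (f : ℝ × EuclideanSpace ℝ (Fin d) → ℝ)
    (p v : ℝ × EuclideanSpace ℝ (Fin d)) : ℝ :=
  iteratedDeriv 2 (fun τ : ℝ => f (p + τ • v)) 0

/-- The d'Alembertian `□ = ∂_t² - Δ_x` on `ℝ × ℝ^d`. -/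
noncomputable def waveOp {d : ℕ} (f : ℝ × EuclideanSpace ℝ (Fin d) → ℝ)
    (p : ℝ × EuclideanSpace ℝ (Fin d)) : ℝ :=
  dirDeriv2 f p (1, 0) - ∑ i : Fin d, dirDeriv2 f p (0, EuclideanSpace.single i 1)

open Topology

section Calculus

variable {E : Type*} [NormedAddCommGroup E] [NormedSpace ℝ E]

theorem iteratedDeriv_two_mul_comp {u : E → ℝ} {φ φ' : ℝ → ℝ} {c c' : ℝ → E} {φ'' : ℝ}
    {c'' : E} {t : ℝ} (hu : ContDiffAt ℝ 2 u (c t))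
    (hφ : ∀ᶠ τ in 𝓝 t, HasDerivAt φ (φ' τ) τ) (hφ' : HasDerivAt φ' φ'' t)
    (hc : ∀ᶠ τ in 𝓝 t, HasDerivAt c (c' τ) τ) (hc' : HasDerivAt c' c'' t) :
    iteratedDeriv 2 (fun τ => φ τ * u (c τ)) t
      = φ'' * u (c t) + 2 * φ' t * fderiv ℝ u (c t) (c' t)
        + φ t * (fderiv ℝ (fderiv ℝ u) (c t) (c' t) (c' t) + fderiv ℝ u (c t) c'') := by
  have hct : ContinuousAt c t := hc.self_of_nhds.continuousAt
  have hdiff : ∀ᶠ τ in 𝓝 t, DifferentiableAt ℝ u (c τ) :=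
    hct.eventually ((hu.eventually (by simp)).mono fun x hx => hx.differentiableAt two_ne_zero)
  have hderiv : deriv (fun τ => φ τ * u (c τ))
      =ᶠ[𝓝 t] fun τ => φ' τ * u (c τ) + φ τ * fderiv ℝ u (c τ) (c' τ) := by
    filter_upwards [hφ, hc, hdiff] with τ hφτ hcτ huτ
    exact (hφτ.mul (huτ.hasFDerivAt.comp_hasDerivAt τ hcτ)).deriv
  have hDu : HasDerivAt (fun τ => fderiv ℝ u (c τ)) (fderiv ℝ (fderiv ℝ u) (c t) (c' t)) t :=
    ((hu.fderiv_right (m := 1) le_rfl).differentiableAt one_ne_zero).hasFDerivAt.comp_hasDerivAt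
      t hc.self_of_nhds
  have hu_c : HasDerivAt (fun τ => u (c τ)) (fderiv ℝ u (c t) (c' t)) t :=
    (hu.differentiableAt two_ne_zero).hasFDerivAt.comp_hasDerivAt t hc.self_of_nhds
  rw [iteratedDeriv_succ, iteratedDeriv_one, hderiv.deriv_eq]
  exact ((hφ'.mul hu_c).add (hφ.self_of_nhds.mul (hDu.clm_apply hc'))).deriv.trans (by ring)

theorem hasDerivAt_add_smul (p w : E) (τ : ℝ) : HasDerivAt (fun τ : ℝ => p + τ • w) w τ := by
  simpa using ((hasDerivAt_id τ).smul_const w).const_add p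

theorem iteratedDeriv_two_comp_add_smul {u : E → ℝ} {p : E} (hu : ContDiffAt ℝ 2 u p) (w : E) :
    iteratedDeriv 2 (fun τ : ℝ => u (p + τ • w)) 0 = fderiv ℝ (fderiv ℝ u) p w w := by
  have := iteratedDeriv_two_mul_comp (φ := fun _ => 1) (φ' := fun _ => 0) (φ'' := 0)
    (c'' := 0) (t := 0) (by simpa using hu) (.of_forall fun τ => hasDerivAt_const τ 1)
    (hasDerivAt_const 0 0) (.of_forall (hasDerivAt_add_smul p w)) (hasDerivAt_const 0 w)
  simpa using this

end Calculus

theorem hasDerivAt_quadratic (a b c τ : ℝ) :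
    HasDerivAt (fun τ => a + b * τ + c * τ ^ 2) (b + 2 * c * τ) τ :=
  (((hasDerivAt_id τ).const_mul b).const_add a).add
    ((hasDerivAt_pow 2 τ).const_mul c) |>.congr_deriv (by push_cast; ring)

noncomputable section Lorentz

variable {F : Type*} [NormedAddCommGroup F] [InnerProductSpace ℝ F]

def lorentzForm : LinearMap.BilinForm ℝ (ℝ × F) :=
  (innerₗ F).compl₁₂ (LinearMap.snd ℝ ℝ F) (LinearMap.snd ℝ ℝ F)
    - (LinearMap.mul ℝ ℝ).compl₁₂ (LinearMap.fst ℝ ℝ F) (LinearMap.fst ℝ ℝ F)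

theorem lorentzForm_apply (p q : ℝ × F) : lorentzForm p q = inner ℝ p.2 q.2 - p.1 * q.1 := rfl

theorem lorentzForm_comm (p q : ℝ × F) : lorentzForm p q = lorentzForm q p := by
  rw [lorentzForm_apply, lorentzForm_apply, real_inner_comm, mul_comm]

theorem lorentzForm_self (p : ℝ × F) : lorentzForm p p = ‖p.2‖ ^ 2 - p.1 ^ 2 := by
  rw [lorentzForm_apply, real_inner_self_eq_norm_sq]
  ring

theorem lorentzForm_add_smul_self (p w : ℝ × F) (τ : ℝ) :
    lorentzForm (p + τ • w) (p + τ • w)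
      = lorentzForm p p + 2 * lorentzForm p w * τ + lorentzForm w w * τ ^ 2 := by
  simp only [map_add, map_smul, LinearMap.add_apply, LinearMap.smul_apply, smul_eq_mul,
    lorentzForm_comm w p]
  ring

theorem lorentzForm_self_pos_iff {p : ℝ × F} : 0 < lorentzForm p p ↔ |p.1| < ‖p.2‖ := by
  rw [lorentzForm_self, sub_pos, ← sq_abs p.1, sq_lt_sq₀ (abs_nonneg _) (norm_nonneg _)]

def conformalInversion (p : ℝ × F) : ℝ × F := (lorentzForm p p)⁻¹ • p

theorem conformalInversion_mk (s : ℝ) (y : F) :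
    conformalInversion (s, y) = (s / (‖y‖ ^ 2 - s ^ 2), (‖y‖ ^ 2 - s ^ 2)⁻¹ • y) := by
  rw [conformalInversion, lorentzForm_self, Prod.smul_mk, smul_eq_mul, inv_mul_eq_div]

theorem lorentzForm_conformalInversion (p : ℝ × F) :
    lorentzForm (conformalInversion p) (conformalInversion p) = (lorentzForm p p)⁻¹ := by
  simp only [conformalInversion, map_smul, LinearMap.smul_apply, smul_eq_mul]
  simpa [mul_assoc] using mul_self_mul_inv (lorentzForm p p)⁻¹

theorem abs_fst_conformalInversion_lt {p : ℝ × F} (hp : |p.1| < ‖p.2‖) :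
    |(conformalInversion p).1| < ‖(conformalInversion p).2‖ :=
  lorentzForm_self_pos_iff.1
    (lorentzForm_conformalInversion p ▸ inv_pos.2 (lorentzForm_self_pos_iff.2 hp))

def kelvinTransform (α : ℝ) (u : ℝ × F → ℝ) (p : ℝ × F) : ℝ :=
  lorentzForm p p ^ α * u (conformalInversion p)

theorem iteratedDeriv_two_kelvinTransform {p : ℝ × F} (hp : 0 < lorentzForm p p)
    {u : ℝ × F → ℝ} (hu : ContDiffAt ℝ 2 u (conformalInversion p)) (α : ℝ) (w : ℝ × F) :
    iteratedDeriv 2 (fun τ : ℝ => kelvinTransform α u (p + τ • w)) 0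
      = lorentzForm p p ^ (α - 2) *
        (fderiv ℝ (fderiv ℝ u) (conformalInversion p) w w
          + lorentzForm p w * ((4 * α - 4) * fderiv ℝ u (conformalInversion p) w
              - 2 / lorentzForm p p * (fderiv ℝ (fderiv ℝ u) (conformalInversion p) w p
                + fderiv ℝ (fderiv ℝ u) (conformalInversion p) p w))
          + lorentzForm p w ^ 2 * (4 * α * (α - 1) * u (conformalInversion p)
              + 8 * (1 - α) / lorentzForm p p * fderiv ℝ u (conformalInversion p) p
              + 4 / lorentzForm p p ^ 2 * fderiv ℝ (fderiv ℝ u) (conformalInversion p) p p)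
          + lorentzForm w w * (2 * α * lorentzForm p p * u (conformalInversion p)
              - 2 * fderiv ℝ u (conformalInversion p) p)) := by
  set Q := lorentzForm p p
  set B := lorentzForm p w
  set N := lorentzForm w w
  set q : ℝ → ℝ := fun τ => Q + 2 * B * τ + N * τ ^ 2
  have hline : (fun τ : ℝ => kelvinTransform α u (p + τ • w))
      = fun τ => q τ ^ α * u ((q τ)⁻¹ • (p + τ • w)) := by
    funext τ
    rw [kelvinTransform, conformalInversion, lorentzForm_add_smul_self]
  have hq : ∀ τ, HasDerivAt q (2 * B + 2 * N * τ) τ := hasDerivAt_quadratic Q (2 * B) N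
  have hq' : HasDerivAt (fun τ => 2 * B + 2 * N * τ) (2 * N) 0 :=
    (((hasDerivAt_id 0).const_mul (2 * N)).const_add (2 * B)).congr_deriv (mul_one _)
  have hq0 : q 0 = Q := by simp [q]
  have hq0_ne : q 0 ≠ 0 := hq0 ▸ hp.ne'
  have hq_pos : ∀ᶠ τ in 𝓝 0, 0 < q τ :=
    (hq 0).continuousAt.eventually (eventually_gt_nhds (hq0 ▸ hp))
  have hφ : ∀ᶠ τ in 𝓝 0, HasDerivAt (fun τ => q τ ^ α)
      ((2 * B + 2 * N * τ) * α * q τ ^ (α - 1)) τ := by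
    filter_upwards [hq_pos] with τ hτ
    exact (hq τ).rpow_const (Or.inl hτ.ne')
  have hφ' := (hq'.mul_const α).mul ((hq 0).rpow_const (p := α - 1) (Or.inl hq0_ne))
  have hc : ∀ᶠ τ in 𝓝 0, HasDerivAt (fun τ => (q τ)⁻¹ • (p + τ • w))
      ((q τ)⁻¹ • w + (-(2 * B + 2 * N * τ) / q τ ^ 2) • (p + τ • w)) τ := by
    filter_upwards [hq_pos] with τ hτ
    exact ((hq τ).inv hτ.ne').smul (hasDerivAt_add_smul p w τ)
  have hc' := (((hq 0).inv hq0_ne).smul_const w).add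
    ((hq'.neg.div ((hq 0).pow 2) (pow_ne_zero 2 hq0_ne)).smul (hasDerivAt_add_smul p w 0))
  have hu' : ContDiffAt ℝ 2 u ((q 0)⁻¹ • (p + (0 : ℝ) • w)) := by
    rwa [hq0, zero_smul, add_zero]
  rw [hline, iteratedDeriv_two_mul_comp hu' hφ hφ' hc hc']
  have hQα : Q ^ α = Q ^ (α - 2) * Q ^ 2 := by
    rw [← Real.rpow_natCast, ← Real.rpow_add hp]; norm_num
  have hQα₁ : Q ^ (α - 1) = Q ^ (α - 2) * Q := by
    rw [← Real.rpow_add_one hp.ne']; ring_nf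
  simp only [hq0, zero_smul, add_zero, mul_zero, Pi.div_apply, Pi.neg_apply, Pi.pow_apply,
    show Q⁻¹ • p = conformalInversion p from rfl, map_add, map_smul, smul_eq_mul,
    add_apply, smul_apply]
  rw [hQα, hQα₁, show α - 1 - 1 = α - 2 by ring]
  field_simp
  ring

end Lorentz

noncomputable section WaveSum

variable {d : ℕ}

def waveSum (f : ℝ × EuclideanSpace ℝ (Fin d) → ℝ) : ℝ :=
  f (1, 0) - ∑ i : Fin d, f (0, EuclideanSpace.single i 1)

theorem waveOp_eq_waveSum (f : ℝ × EuclideanSpace ℝ (Fin d) → ℝ)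
    (p : ℝ × EuclideanSpace ℝ (Fin d)) : waveOp f p = waveSum (dirDeriv2 f p) := rfl

theorem waveSum_const_mul (c : ℝ) (f : ℝ × EuclideanSpace ℝ (Fin d) → ℝ) :
    waveSum (fun w => c * f w) = c * waveSum f := by
  rw [waveSum, waveSum, ← Finset.mul_sum, mul_sub]

theorem waveSum_lorentzForm_mul (p : ℝ × EuclideanSpace ℝ (Fin d))
    (ℓ : (ℝ × EuclideanSpace ℝ (Fin d)) →ₗ[ℝ] ℝ) :
    waveSum (fun w => lorentzForm p w * ℓ w) = -ℓ p := by
  have hsum : ∑ i : Fin d,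
      lorentzForm p (0, EuclideanSpace.single i 1) * ℓ (0, EuclideanSpace.single i 1)
        = ℓ (0, p.2) := by
    conv_rhs => rw [← (EuclideanSpace.basisFun (Fin d) ℝ).sum_repr' p.2]
    rw [show ∀ x, ℓ (0, x) = (ℓ ∘ₗ LinearMap.inr ℝ ℝ _) x from fun _ => rfl, map_sum]
    simp [lorentzForm_apply, real_inner_comm]
  have hp : ℓ p = p.1 * ℓ (1, 0) + ℓ (0, p.2) := by
    conv_lhs => rw [show p = p.1 • ((1 : ℝ), (0 : EuclideanSpace ℝ (Fin d))) + (0, p.2) by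
      ext <;> simp]
    rw [map_add, map_smul, smul_eq_mul]
  rw [waveSum, hsum, hp]
  simp only [lorentzForm_apply, inner_zero_right, mul_one, zero_sub]
  ring

theorem waveSum_lorentzForm_self :
    waveSum (fun w : ℝ × EuclideanSpace ℝ (Fin d) => lorentzForm w w) = -(d + 1) := by
  simp only [waveSum, lorentzForm_self, norm_zero, PiLp.norm_single, norm_one,
    Finset.sum_const, Finset.card_univ, Fintype.card_fin, nsmul_eq_mul]
  ring

theorem waveSum_quadratic (g : ℝ × EuclideanSpace ℝ (Fin d) → ℝ) (p : ℝ × EuclideanSpace ℝ (Fin d))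
    (ℓ : (ℝ × EuclideanSpace ℝ (Fin d)) →ₗ[ℝ] ℝ) (a b : ℝ) :
    waveSum (fun w => g w + lorentzForm p w * ℓ w + lorentzForm p w ^ 2 * a + lorentzForm w w * b)
      = waveSum g - ℓ p - lorentzForm p p * a - (d + 1) * b := by
  have h₁ := waveSum_lorentzForm_mul p ℓ
  have h₂ := waveSum_lorentzForm_mul p (lorentzForm p)
  have h₃ := waveSum_lorentzForm_self (d := d)
  simp only [waveSum] at h₁ h₂ h₃ ⊢
  simp only [Finset.sum_add_distrib, ← Finset.sum_mul, sq]
  linear_combination h₁ + a * h₂ + b * h₃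

theorem waveOp_kelvinTransform {p : ℝ × EuclideanSpace ℝ (Fin d)} (hp : 0 < lorentzForm p p)
    {u : ℝ × EuclideanSpace ℝ (Fin d) → ℝ} (hu : ContDiffAt ℝ 2 u (conformalInversion p)) :
    waveOp (kelvinTransform (-(((d : ℝ) - 1) / 2)) u) p
      = lorentzForm p p ^ (-(((d : ℝ) - 1) / 2) - 2) * waveOp u (conformalInversion p) := by
  set α : ℝ := -(((d : ℝ) - 1) / 2)
  set Q := lorentzForm p p
  set x := conformalInversion p
  set ℓ : (ℝ × EuclideanSpace ℝ (Fin d)) →ₗ[ℝ] ℝ := ((4 * α - 4) • fderiv ℝ u x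
    - (2 / Q) • ((fderiv ℝ (fderiv ℝ u) x).flip p + fderiv ℝ (fderiv ℝ u) x p) :
      (ℝ × EuclideanSpace ℝ (Fin d)) →L[ℝ] ℝ).toLinearMap
  have hv : dirDeriv2 (kelvinTransform α u) p = fun w => Q ^ (α - 2) *
      (fderiv ℝ (fderiv ℝ u) x w w + lorentzForm p w * ℓ w
        + lorentzForm p w ^ 2 * (4 * α * (α - 1) * u x + 8 * (1 - α) / Q * fderiv ℝ u x p
            + 4 / Q ^ 2 * fderiv ℝ (fderiv ℝ u) x p p)
        + lorentzForm w w * (2 * α * Q * u x - 2 * fderiv ℝ u x p)) := by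
    funext w
    rw [dirDeriv2, iteratedDeriv_two_kelvinTransform hp hu]
    simp only [ℓ, ContinuousLinearMap.coe_coe, sub_apply, smul_apply, add_apply,
      ContinuousLinearMap.flip_apply, smul_eq_mul]
    ring
  have hu₂ : dirDeriv2 u x = fun w => fderiv ℝ (fderiv ℝ u) x w w :=
    funext (iteratedDeriv_two_comp_add_smul hu)
  rw [waveOp_eq_waveSum, waveOp_eq_waveSum, hv, waveSum_const_mul,
    waveSum_quadratic, hu₂]
  simp only [ℓ, ContinuousLinearMap.coe_coe, sub_apply, smul_apply, add_apply,
    ContinuousLinearMap.flip_apply, smul_eq_mul]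
  congr 1
  field_simp
  ring

end WaveSum

theorem criticalNonlinearity_conformal_scaling {q : ℝ} (hq : 0 < q) {D : ℝ} (hD : D ≠ 2) (a : ℝ) :
    q ^ (2 / (D - 2)) * |q ^ (-((D - 1) / 2)) * a| ^ (4 / (D - 2)) * (q ^ (-((D - 1) / 2)) * a)
      = q ^ (-((D - 1) / 2) - 2) * (|a| ^ (4 / (D - 2)) * a) := by
  have hD₂ : D - 2 ≠ 0 := sub_ne_zero.2 hD
  rw [abs_mul, abs_of_pos (Real.rpow_pos_of_pos hq _),
    Real.mul_rpow (Real.rpow_nonneg hq.le _) (abs_nonneg _), ← Real.rpow_mul hq.le]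
  calc _ = q ^ (2 / (D - 2) + -((D - 1) / 2) * (4 / (D - 2)) + -((D - 1) / 2))
        * (|a| ^ (4 / (D - 2)) * a) := by
        rw [Real.rpow_add hq, Real.rpow_add hq]; ring
    _ = _ := by congr 2; field_simp; ring

theorem conformal_inversion_wave_equation_general {d : ℕ} (hd : 3 ≤ d)
    (u : ℝ × EuclideanSpace ℝ (Fin d) → ℝ)
    (hu : ContDiffOn ℝ 2 u {p | ‖p.2‖ > |p.1|}) :
    let v : ℝ × EuclideanSpace ℝ (Fin d) → ℝ := fun p =>
      (‖p.2‖ ^ 2 - p.1 ^ 2) ^ (-(((d : ℝ) - 1) / 2)) *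
        u (p.1 / (‖p.2‖ ^ 2 - p.1 ^ 2), (‖p.2‖ ^ 2 - p.1 ^ 2)⁻¹ • p.2)
    (∀ (s : ℝ) (y : EuclideanSpace ℝ (Fin d)), ‖y‖ > |s| →
        waveOp u (s / (‖y‖ ^ 2 - s ^ 2), (‖y‖ ^ 2 - s ^ 2)⁻¹ • y)
          = (‖y‖ + s) ^ (((d : ℝ) + 3) / 2) * (‖y‖ - s) ^ (((d : ℝ) + 3) / 2)
              * waveOp v (s, y)) ∧
    ((∀ p : ℝ × EuclideanSpace ℝ (Fin d), ‖p.2‖ > |p.1| →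
          waveOp u p = |u p| ^ (4 / ((d : ℝ) - 2)) * u p) →
        ∀ (s : ℝ) (y : EuclideanSpace ℝ (Fin d)), ‖y‖ > |s| →
          waveOp v (s, y)
            = (‖y‖ ^ 2 - s ^ 2) ^ (2 / ((d : ℝ) - 2))
                * |v (s, y)| ^ (4 / ((d : ℝ) - 2)) * v (s, y)) := by
  intro v
  have hQ : ∀ {s : ℝ} {y : EuclideanSpace ℝ (Fin d)}, ‖y‖ > |s| → 0 < ‖y‖ ^ 2 - s ^ 2 :=
    fun {s y} hsy => lorentzForm_self (s, y) ▸ lorentzForm_self_pos_iff.2 hsy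
  have hv : v = kelvinTransform (-(((d : ℝ) - 1) / 2)) u := by
    funext ⟨s, y⟩
    rw [kelvinTransform, conformalInversion_mk, lorentzForm_self]
  have hwave : ∀ (s : ℝ) (y : EuclideanSpace ℝ (Fin d)), ‖y‖ > |s| →
      waveOp v (s, y) = (‖y‖ ^ 2 - s ^ 2) ^ (-(((d : ℝ) - 1) / 2) - 2)
        * waveOp u (s / (‖y‖ ^ 2 - s ^ 2), (‖y‖ ^ 2 - s ^ 2)⁻¹ • y) := by
    intro s y hsy
    have hopen : IsOpen {p : ℝ × EuclideanSpace ℝ (Fin d) | ‖p.2‖ > |p.1|} :=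
      isOpen_lt continuous_fst.abs continuous_snd.norm
    rw [hv, waveOp_kelvinTransform (lorentzForm_self_pos_iff.2 hsy)
      (hu.contDiffAt (hopen.mem_nhds (abs_fst_conformalInversion_lt (p := (s, y)) hsy))),
      lorentzForm_self, conformalInversion_mk]
  refine ⟨fun s y hsy => ?_, fun hu_eq s y hsy => ?_⟩
  · obtain ⟨hs₁, hs₂⟩ := abs_lt.1 hsy
    rw [hwave s y hsy, ← mul_assoc, ← Real.mul_rpow (by linarith) (by linarith),
      show (‖y‖ + s) * (‖y‖ - s) = ‖y‖ ^ 2 - s ^ 2 by ring, ← Real.rpow_add (hQ hsy),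
      show ((d : ℝ) + 3) / 2 + (-(((d : ℝ) - 1) / 2) - 2) = 0 by ring, Real.rpow_zero, one_mul]
  · have hx := abs_fst_conformalInversion_lt (p := (s, y)) hsy
    rw [conformalInversion_mk] at hx
    have hd₂ : (d : ℝ) ≠ 2 := by norm_cast; omega
    rw [hwave s y hsy, hu_eq _ hx, show v (s, y) = _ from rfl,
      criticalNonlinearity_conformal_scaling (hQ hsy) hd₂]

/-- Conformal inversion of the wave operator: if
`v(s,y) = (|y|²-s²)^{-(d-1)/2} u((s,y)/(|y|²-s²))` on `|y| > |s|`, then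
`□_{t,x} u` at the corresponding point equals
`(|y|+s)^{(d+3)/2}(|y|-s)^{(d+3)/2} □_{s,y} v(s,y)`.  In particular, if
`□ u = |u|^{4/(d-2)} u` then `□ v = (|y|²-s²)^{2/(d-2)} |v|^{4/(d-2)} v`. -/
theorem conformal_inversion_wave_equation {d : ℕ} (hd : 3 ≤ d) (hd' : d ≤ 5)
    (u : ℝ × EuclideanSpace ℝ (Fin d) → ℝ)
    (hu : ContDiffOn ℝ 2 u {p | ‖p.2‖ > |p.1|}) :
    let v : ℝ × EuclideanSpace ℝ (Fin d) → ℝ := fun p =>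
      (‖p.2‖ ^ 2 - p.1 ^ 2) ^ (-(((d : ℝ) - 1) / 2)) *
        u (p.1 / (‖p.2‖ ^ 2 - p.1 ^ 2), (‖p.2‖ ^ 2 - p.1 ^ 2)⁻¹ • p.2)
    (∀ (s : ℝ) (y : EuclideanSpace ℝ (Fin d)), ‖y‖ > |s| →
        waveOp u (s / (‖y‖ ^ 2 - s ^ 2), (‖y‖ ^ 2 - s ^ 2)⁻¹ • y)
          = (‖y‖ + s) ^ (((d : ℝ) + 3) / 2) * (‖y‖ - s) ^ (((d : ℝ) + 3) / 2)
              * waveOp v (s, y)) ∧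
    ((∀ p : ℝ × EuclideanSpace ℝ (Fin d), ‖p.2‖ > |p.1| →
          waveOp u p = |u p| ^ (4 / ((d : ℝ) - 2)) * u p) →
        ∀ (s : ℝ) (y : EuclideanSpace ℝ (Fin d)), ‖y‖ > |s| →
          waveOp v (s, y)
            = (‖y‖ ^ 2 - s ^ 2) ^ (2 / ((d : ℝ) - 2))
                * |v (s, y)| ^ (4 / ((d : ℝ) - 2)) * v (s, y)) :=
  conformal_inversion_wave_equation_general hd u hu
end

section
/- Let Q : R^d → R with d = 3 satisfy |Q(x)| ≤ K |x|^{2-d} for all x ≠ 0, and let Q_l(t,x) = Q(P_2 x + (1-|l|^2)^{-1/2} P_1 (x - lt)) be its Lorentz transform with |l| < 1, where P_1 = l⊗l/|l|^2 and P_2 = I - P_1. Define I = |y|^2 - s^2 and Q̄_l(s,y) = Q_l(s/I, y/I). Then there is a constant C depending only on l such that |Q̄_l(s,y)| ≤ C K I |y|^{-1} for all |y| > s ≥ 0. -/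
open scoped RealInnerProductSpace

private lemma aux_norm_boost (l : EuclideanSpace ℝ (Fin 3)) (hl0 : l ≠ 0) (γ : ℝ) (hγ : 1 ≤ γ)
    (x : EuclideanSpace ℝ (Fin 3)) (t : ℝ) :
    ‖x - t • l‖ ≤ ‖(x - (⟪l, x⟫ / ‖l‖ ^ 2) • l) + γ • ((⟪l, x - t • l⟫ / ‖l‖ ^ 2) • l)‖ := by
  have hl : (0:ℝ) < ‖l‖ := norm_pos_iff.mpr hl0
  set a : ℝ := ⟪l, x⟫ / ‖l‖ ^ 2 with ha
  have hb : ⟪l, x - t • l⟫ / ‖l‖ ^ 2 = a - t := by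
    rw [inner_sub_right, real_inner_smul_right, real_inner_self_eq_norm_sq, ha]
    field_simp
  set u := x - a • l with hu
  have hul : ⟪u, l⟫ = 0 := by
    rw [hu, inner_sub_left, real_inner_smul_left, real_inner_self_eq_norm_sq, ha,
      real_inner_comm]
    field_simp
    ring
  have key : ∀ c : ℝ, ‖u + c • l‖ ^ 2 = ‖u‖ ^ 2 + c ^ 2 * ‖l‖ ^ 2 := by
    intro c
    rw [norm_add_sq_real, real_inner_smul_right, hul, norm_smul]
    simp [mul_pow, sq_abs]
  have h1 : x - t • l = u + (a - t) • l := by rw [hu]; module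
  have h2 : (x - a • l) + γ • ((⟪l, x - t • l⟫ / ‖l‖ ^ 2) • l) = u + (γ * (a - t)) • l := by
    rw [hb, hu]; module
  rw [h2, h1]
  have k1 := key (a - t)
  have k2 := key (γ * (a - t))
  nlinarith [norm_nonneg (u + (a - t) • l), norm_nonneg (u + (γ * (a - t)) • l),
    sq_nonneg (a - t), sq_nonneg ‖l‖, sq_nonneg (γ - 1), sq_nonneg (γ + 1),
    mul_nonneg (sq_nonneg (a - t)) (sq_nonneg ‖l‖)]

/-- Decay of the conformally inverted Lorentz boost of a decaying steady state in `d = 3`: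
if `|Q(x)| ≤ K|x|^{2-d}` and `Q_l` is the Lorentz boost of `Q` with speed `|l| < 1`, then
the conformal inversion `Q̄_l(s,y) = Q_l((s,y)/(|y|²-s²))` satisfies
`|Q̄_l(s,y)| ≤ C K (|y|²-s²) |y|⁻¹` on `|y| > s ≥ 0`, with `C` depending only on `l`. -/
theorem inverted_soliton_decay_d3
    (l : EuclideanSpace ℝ (Fin 3)) (hl0 : l ≠ 0) (hl : ‖l‖ < 1) :
    ∃ C > 0, ∀ (Q : EuclideanSpace ℝ (Fin 3) → ℝ) (K : ℝ),
      (∀ x : EuclideanSpace ℝ (Fin 3), x ≠ 0 → |Q x| ≤ K * ‖x‖ ^ ((2 : ℝ) - 3)) →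
      ∀ (s : ℝ) (y : EuclideanSpace ℝ (Fin 3)), ‖y‖ > s → 0 ≤ s →
        |(fun (t : ℝ) (x : EuclideanSpace ℝ (Fin 3)) =>
            Q ((x - (⟪l, x⟫ / ‖l‖ ^ 2) • l) +
              (1 / Real.sqrt (1 - ‖l‖ ^ 2)) •
                ((⟪l, x - t • l⟫ / ‖l‖ ^ 2) • l)))
          (s / (‖y‖ ^ 2 - s ^ 2)) ((‖y‖ ^ 2 - s ^ 2)⁻¹ • y)|
          ≤ C * K * (‖y‖ ^ 2 - s ^ 2) * ‖y‖⁻¹ := by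
  have hlpos : (0:ℝ) < ‖l‖ := norm_pos_iff.mpr hl0
  have h1l : (0:ℝ) < 1 - ‖l‖ := by linarith
  refine ⟨(1 - ‖l‖)⁻¹, inv_pos.mpr h1l, ?_⟩
  intro Q K hQ s y hys hs
  have hy : (0:ℝ) < ‖y‖ := lt_of_le_of_lt hs hys
  have hI : (0:ℝ) < ‖y‖ ^ 2 - s ^ 2 := by nlinarith
  set I := ‖y‖ ^ 2 - s ^ 2 with hIdef
  have hK : 0 ≤ K := by
    have h := hQ l hl0
    have hp : (0:ℝ) < ‖l‖ ^ ((2:ℝ) - 3) := Real.rpow_pos_of_pos hlpos _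
    nlinarith [abs_nonneg (Q l)]
  have hγ : (1:ℝ) ≤ 1 / Real.sqrt (1 - ‖l‖ ^ 2) := by
    have h2 : (0:ℝ) < 1 - ‖l‖ ^ 2 := by nlinarith [norm_nonneg l]
    have hs1 : Real.sqrt (1 - ‖l‖ ^ 2) ≤ Real.sqrt 1 :=
      Real.sqrt_le_sqrt (by nlinarith [norm_nonneg l])
    rw [Real.sqrt_one] at hs1
    exact one_le_one_div (Real.sqrt_pos.mpr h2) hs1
  set x : EuclideanSpace ℝ (Fin 3) := I⁻¹ • y with hx
  set t : ℝ := s / I with ht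
  set z : EuclideanSpace ℝ (Fin 3) :=
    (x - (⟪l, x⟫ / ‖l‖ ^ 2) • l) +
      (1 / Real.sqrt (1 - ‖l‖ ^ 2)) • ((⟪l, x - t • l⟫ / ‖l‖ ^ 2) • l) with hz
  have hxt : x - t • l = I⁻¹ • (y - s • l) := by
    rw [hx, ht, smul_sub, smul_smul, div_eq_inv_mul]
  have hlow : I⁻¹ * ((1 - ‖l‖) * ‖y‖) ≤ ‖x - t • l‖ := by
    rw [hxt, norm_smul, Real.norm_eq_abs, abs_of_pos (inv_pos.mpr hI)]
    have h1 : ‖y‖ - s * ‖l‖ ≤ ‖y - s • l‖ := by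
      have h2 := norm_sub_norm_le y (s • l)
      rw [norm_smul, Real.norm_eq_abs, abs_of_nonneg hs] at h2
      linarith
    have h3 : (1 - ‖l‖) * ‖y‖ ≤ ‖y - s • l‖ := by nlinarith [norm_nonneg l]
    exact mul_le_mul_of_nonneg_left h3 (le_of_lt (inv_pos.mpr hI))
  have hzlow : I⁻¹ * ((1 - ‖l‖) * ‖y‖) ≤ ‖z‖ :=
    le_trans hlow (aux_norm_boost l hl0 _ hγ x t)
  have hpos : (0:ℝ) < I⁻¹ * ((1 - ‖l‖) * ‖y‖) := by positivity
  have hzpos : (0:ℝ) < ‖z‖ := lt_of_lt_of_le hpos hzlow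
  have hz0 : z ≠ 0 := norm_pos_iff.mp hzpos
  show |Q z| ≤ (1 - ‖l‖)⁻¹ * K * I * ‖y‖⁻¹
  calc |Q z| ≤ K * ‖z‖ ^ ((2:ℝ) - 3) := hQ z hz0
    _ = K * ‖z‖⁻¹ := by
        rw [show ((2:ℝ) - 3) = -1 by norm_num, Real.rpow_neg_one]
    _ ≤ K * (I⁻¹ * ((1 - ‖l‖) * ‖y‖))⁻¹ :=
        mul_le_mul_of_nonneg_left (inv_anti₀ hpos hzlow) hK
    _ = (1 - ‖l‖)⁻¹ * K * I * ‖y‖⁻¹ := by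
        rw [mul_inv, inv_inv, mul_inv]
        ring
end

section
/- Let d = 3, l = (l_1, 0, 0) with |l_1| < 1, and Q : R^3 → R smooth with K = sup_x (|x| |Q(x)| + |x|^2 |∇Q(x)|) < ∞. Define Q̄_l(s,y) = Q_l(s/I, y/I) with I = |y|^2 - s^2 and Q_l the Lorentz boost of Q. Then there is C = C(l_1) such that |∇_y Q̄_l(s,y)| ≤ C K for all (s,y) with |y| > s ≥ 0: the gradient of the conformally inverted travelling wave is uniformly bounded in the exterior region. -/
noncomputable section GradBoundAux

private lemma aux_quad_key {a r t y0 b : ℝ} (ha0 : 0 ≤ a) (ha1 : a < 1) (hb : 0 ≤ b)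
    (hr2 : y0^2 + b = r^2) (hr0 : 0 ≤ r) (ht : |t| ≤ a * r) :
    ((1-a)/2)^2 * r^2 ≤ (y0 - t)^2 + b := by
  rcases le_or_gt ((1+a)/2 * r) |y0| with h | h
  · have h1 : (1-a)/2 * r ≤ |y0 - t| := by
      have h2 := abs_sub_abs_le_abs_sub y0 t
      nlinarith
    have h2 : ((1-a)/2 * r)^2 ≤ |y0 - t|^2 := by
      have h3 : (0:ℝ) ≤ (1-a)/2 * r := by nlinarith
      exact pow_le_pow_left₀ h3 h1 2
    rw [sq_abs] at h2
    nlinarith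
  · have h2 : y0^2 ≤ ((1+a)/2 * r)^2 := by
      rw [← sq_abs y0]; exact pow_le_pow_left₀ (abs_nonneg _) h.le 2
    nlinarith [sq_nonneg (y0 - t), mul_nonneg (sq_nonneg r)
      (show (0:ℝ) ≤ 1 - a^2 by nlinarith [abs_nonneg a])]

/-- the coordinate bound in Euclidean space -/
private lemma aux_coord_le {n : ℕ} (x : EuclideanSpace ℝ (Fin n)) (i : Fin n) :
    |x i| ≤ ‖x‖ := by
  rw [EuclideanSpace.norm_eq]
  have h1 : |x i|^2 ≤ ∑ j, ‖x j‖^2 := by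
    have := Finset.single_le_sum (f := fun j => ‖x j‖^2)
      (fun j _ => by positivity) (Finset.mem_univ i)
    simpa [Real.norm_eq_abs] using this
  have h2 : (0:ℝ) ≤ ∑ j, ‖x j‖^2 := by positivity
  nlinarith [Real.sq_sqrt h2, Real.sqrt_nonneg (∑ j, ‖x j‖^2), abs_nonneg (x i),
    sq_nonneg (|x i| - Real.sqrt (∑ j, ‖x j‖^2))]

/-- The boost as a continuous linear map. -/
private def Lmap (l1 : ℝ) : (ℝ × EuclideanSpace ℝ (Fin 3)) →L[ℝ] EuclideanSpace ℝ (Fin 3) :=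
  ((EuclideanSpace.equiv (Fin 3) ℝ).symm : (Fin 3 → ℝ) →L[ℝ] EuclideanSpace ℝ (Fin 3)).comp
    (ContinuousLinearMap.pi (fun i =>
      if i = 0 then
        (Real.sqrt (1 - l1^2))⁻¹ • ((EuclideanSpace.proj (0 : Fin 3)).comp
          (ContinuousLinearMap.snd ℝ ℝ (EuclideanSpace ℝ (Fin 3)))
          - l1 • ContinuousLinearMap.fst ℝ ℝ (EuclideanSpace ℝ (Fin 3)))
      else (EuclideanSpace.proj i).comp
        (ContinuousLinearMap.snd ℝ ℝ (EuclideanSpace ℝ (Fin 3)))))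

private lemma Lmap_apply (l1 : ℝ) (p : ℝ × EuclideanSpace ℝ (Fin 3)) (i : Fin 3) :
    Lmap l1 p i = if i = 0 then (p.2 0 - l1 * p.1) / Real.sqrt (1 - l1^2) else p.2 i := by
  have : Lmap l1 p i = (if i = 0 then
        (Real.sqrt (1 - l1^2))⁻¹ • ((EuclideanSpace.proj (0 : Fin 3)).comp
          (ContinuousLinearMap.snd ℝ ℝ (EuclideanSpace ℝ (Fin 3)))
          - l1 • ContinuousLinearMap.fst ℝ ℝ (EuclideanSpace ℝ (Fin 3)))
      else (EuclideanSpace.proj i).comp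
        (ContinuousLinearMap.snd ℝ ℝ (EuclideanSpace ℝ (Fin 3)))) p := rfl
  rw [this]
  split_ifs with h
  · simp [ContinuousLinearMap.smul_apply, ContinuousLinearMap.sub_apply, div_eq_inv_mul]
  · simp

private lemma Lmap_eq (l1 : ℝ) (p : ℝ × EuclideanSpace ℝ (Fin 3)) :
    Lmap l1 p = (EuclideanSpace.equiv (Fin 3) ℝ).symm (fun i =>
      if i = 0 then (p.2 0 - l1 * p.1) / Real.sqrt (1 - l1^2) else p.2 i) := by
  apply (EuclideanSpace.equiv (Fin 3) ℝ).injective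
  ext i
  have h1 : (EuclideanSpace.equiv (Fin 3) ℝ) ((EuclideanSpace.equiv (Fin 3) ℝ).symm
      (fun i => if i = 0 then (p.2 0 - l1 * p.1) / Real.sqrt (1 - l1^2) else p.2 i)) i
      = if i = 0 then (p.2 0 - l1 * p.1) / Real.sqrt (1 - l1^2) else p.2 i := by
    rw [ContinuousLinearEquiv.apply_symm_apply]
  rw [h1]
  exact Lmap_apply l1 p i

end GradBoundAux

local notation "E3" => EuclideanSpace ℝ (Fin 3)
set_option maxHeartbeats 4000000 in
/-- Uniform gradient bound for the conformally inverted travelling wave in `d = 3`: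
with `Q_l(t,x) = Q((x₁ - l₁t)/√(1-l₁²), x₂, x₃)`, `I = |y|² - s²` and
`Q̄_l(s,y) = Q_l(s/I, y/I)`, if `K = sup (|x||Q(x)| + |x|²|∇Q(x)|) < ∞` then
`|∇_y Q̄_l(s,y)| ≤ C(l₁) K` for all `|y| > s ≥ 0`. -/
theorem gradient_bound_inverted_soliton (l1 : ℝ) (hl : |l1| < 1) :
    ∃ C > 0, ∀ (Q : EuclideanSpace ℝ (Fin 3) → ℝ), ContDiff ℝ (⊤ : ℕ∞) Q →
      ∀ K : ℝ, (∀ x : EuclideanSpace ℝ (Fin 3),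
          ‖x‖ * |Q x| + ‖x‖ ^ 2 * ‖fderiv ℝ Q x‖ ≤ K) →
      ∀ (s : ℝ) (y : EuclideanSpace ℝ (Fin 3)), ‖y‖ > s → 0 ≤ s →
        ‖fderiv ℝ (fun z : EuclideanSpace ℝ (Fin 3) =>
            (fun (t : ℝ) (x : EuclideanSpace ℝ (Fin 3)) =>
              Q ((EuclideanSpace.equiv (Fin 3) ℝ).symm (fun i =>
                if i = 0 then (x 0 - l1 * t) / Real.sqrt (1 - l1 ^ 2) else x i)))
              (s / (‖z‖ ^ 2 - s ^ 2)) ((‖z‖ ^ 2 - s ^ 2)⁻¹ • z)) y‖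
          ≤ C * K := by
  classical
  have h1l : (0:ℝ) < 1 - l1^2 := by nlinarith [abs_nonneg l1, sq_abs l1]
  have hsq_pos : (0:ℝ) < Real.sqrt (1 - l1^2) := Real.sqrt_pos.mpr h1l
  have hsq_le : Real.sqrt (1 - l1^2) ≤ 1 := by
    have h := Real.sqrt_le_sqrt (show 1 - l1^2 ≤ 1 by nlinarith [sq_nonneg l1])
    simpa using h
  obtain ⟨c0, hc0⟩ : ∃ xx : ℝ, xx = (1 - |l1|)/2 := ⟨_, rfl⟩
  have hc0pos : 0 < c0 := by rw [hc0]; linarith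
  obtain ⟨CL, hCL⟩ : ∃ xx : ℝ, xx = Real.sqrt 3 * (2 / Real.sqrt (1 - l1^2)) := ⟨_, rfl⟩
  have hCLpos : 0 < CL := by
    rw [hCL]
    apply mul_pos (Real.sqrt_pos.mpr (by norm_num)) (div_pos (by norm_num) hsq_pos)
  have hc0ne : c0 ≠ 0 := ne_of_gt hc0pos
  refine ⟨3 * CL / c0^2, div_pos (by linarith) (pow_pos hc0pos 2), ?_⟩
  intro Q hQ K hK s y hys hs0
  -- basic positivity facts
  have hr0 : 0 < ‖y‖ := lt_of_le_of_lt hs0 hys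
  have hI : 0 < ‖y‖^2 - s^2 := by nlinarith
  have hIne : ‖y‖^2 - s^2 ≠ 0 := ne_of_gt hI
  have hK0 : 0 ≤ K := le_trans (by simp) (hK 0)
  -- operator norm bound for Lmap
  have hLnorm : ‖Lmap l1‖ ≤ CL := by
    apply ContinuousLinearMap.opNorm_le_bound _ (le_of_lt hCLpos)
    intro p
    have hb : (1:ℝ) ≤ 2 / Real.sqrt (1 - l1^2) := by
      rw [le_div_iff₀ hsq_pos]; linarith
    have hp1 : |p.1| ≤ ‖p‖ := by
      simpa [Real.norm_eq_abs] using norm_fst_le p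
    have hp2 : ∀ i, |p.2 i| ≤ ‖p‖ :=
      fun i => le_trans (aux_coord_le p.2 i) (norm_snd_le p)
    have hcomp : ∀ i : Fin 3, |Lmap l1 p i| ≤ (2 / Real.sqrt (1 - l1^2)) * ‖p‖ := by
      intro i
      rw [Lmap_apply]
      split_ifs with h
      · rw [abs_div, abs_of_pos hsq_pos, div_le_iff₀ hsq_pos]
        have h1 : |p.2 0 - l1 * p.1| ≤ |p.2 0| + |l1| * |p.1| := by
          calc |p.2 0 - l1 * p.1| ≤ |p.2 0| + |l1 * p.1| := abs_sub _ _
            _ = |p.2 0| + |l1| * |p.1| := by rw [abs_mul]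
        have h2 : |p.2 0| + |l1| * |p.1| ≤ 2 * ‖p‖ := by
          have := hp2 0
          nlinarith [abs_nonneg p.1, norm_nonneg p, abs_nonneg l1]
        calc |p.2 0 - l1 * p.1| ≤ 2 * ‖p‖ := le_trans h1 h2
          _ = 2 / Real.sqrt (1 - l1^2) * ‖p‖ * Real.sqrt (1 - l1^2) := by
            field_simp
      · exact le_trans (hp2 i) (by nlinarith [norm_nonneg p])
    have hnorm : ‖Lmap l1 p‖ ≤ Real.sqrt (3 * ((2 / Real.sqrt (1 - l1^2)) * ‖p‖)^2) := by
      rw [EuclideanSpace.norm_eq]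
      apply Real.sqrt_le_sqrt
      rw [Fin.sum_univ_three]
      have e0 := hcomp 0; have e1 := hcomp 1; have e2 := hcomp 2
      have a0 : ‖Lmap l1 p 0‖^2 ≤ ((2 / Real.sqrt (1 - l1^2)) * ‖p‖)^2 := by
        rw [Real.norm_eq_abs]; nlinarith [abs_nonneg (Lmap l1 p 0)]
      have a1 : ‖Lmap l1 p 1‖^2 ≤ ((2 / Real.sqrt (1 - l1^2)) * ‖p‖)^2 := by
        rw [Real.norm_eq_abs]; nlinarith [abs_nonneg (Lmap l1 p 1)]
      have a2 : ‖Lmap l1 p 2‖^2 ≤ ((2 / Real.sqrt (1 - l1^2)) * ‖p‖)^2 := by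
        rw [Real.norm_eq_abs]; nlinarith [abs_nonneg (Lmap l1 p 2)]
      linarith
    have hfin : Real.sqrt (3 * ((2 / Real.sqrt (1 - l1^2)) * ‖p‖)^2)
        = CL * ‖p‖ := by
      rw [Real.sqrt_mul (by norm_num), Real.sqrt_sq (by positivity), hCL]
      ring
    rw [hfin] at hnorm
    exact hnorm
  -- derivative of the norm squared
  obtain ⟨nn, hnn⟩ : ∃ xx : E3 →L[ℝ] ℝ, xx = (fderivInnerCLM ℝ (y, y)).comp
    ((ContinuousLinearMap.id ℝ E3).prod (ContinuousLinearMap.id ℝ E3)) := ⟨_, rfl⟩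
  have hIy : HasFDerivAt (fun z : E3 => ‖z‖^2 - s^2) nn y := by
    have h := ((hasFDerivAt_id y).inner ℝ (hasFDerivAt_id y)).sub_const (s^2)
    simp only [_root_.id] at h
    have he : (fun z : E3 => (inner ℝ z z : ℝ) - s^2) = fun z : E3 => ‖z‖^2 - s^2 := by
      funext z; rw [real_inner_self_eq_norm_sq]
    rw [he] at h
    rwa [← hnn] at h
  have hnn_norm : ‖nn‖ ≤ 2 * ‖y‖ := by
    apply ContinuousLinearMap.opNorm_le_bound _ (by positivity)
    intro h
    have happ : nn h = (inner ℝ y h : ℝ) + (inner ℝ h y : ℝ) := by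
      rw [hnn]
      simp only [ContinuousLinearMap.comp_apply, ContinuousLinearMap.prod_apply,
        ContinuousLinearMap.coe_id', _root_.id, fderivInnerCLM_apply]
    rw [happ, Real.norm_eq_abs]
    calc |(inner ℝ y h : ℝ) + (inner ℝ h y : ℝ)| ≤ |(inner ℝ y h : ℝ)| + |(inner ℝ h y : ℝ)| :=
          abs_add_le _ _
      _ ≤ ‖y‖ * ‖h‖ + ‖h‖ * ‖y‖ := add_le_add (abs_real_inner_le_norm y h)
          (abs_real_inner_le_norm h y)
      _ = 2 * ‖y‖ * ‖h‖ := by ring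
  -- derivative of the inverse
  obtain ⟨ninv, hninv_def⟩ : ∃ xx : E3 →L[ℝ] ℝ, xx = (-((‖y‖^2 - s^2)^2)⁻¹) • nn := ⟨_, rfl⟩
  have hinv : HasFDerivAt (fun z : E3 => (‖z‖^2 - s^2)⁻¹) ninv y := by
    have h := (hasDerivAt_inv hIne).comp_hasFDerivAt y hIy
    rw [hninv_def]; exact h
  have hninv_norm : ‖ninv‖ ≤ ((‖y‖^2 - s^2)^2)⁻¹ * (2 * ‖y‖) := by
    have hsm := norm_smul (-((‖y‖^2 - s^2)^2)⁻¹) nn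
    rw [Real.norm_eq_abs, abs_neg, abs_of_pos (show (0:ℝ) < ((‖y‖^2 - s^2)^2)⁻¹ by positivity)]
      at hsm
    rw [hninv_def, hsm]
    exact mul_le_mul_of_nonneg_left hnn_norm (by positivity)
  -- derivative of first component
  obtain ⟨D2, hD2def⟩ : ∃ xx : E3 →L[ℝ] ℝ, xx = s • ninv := ⟨_, rfl⟩
  have h2 : HasFDerivAt (fun z : E3 => s / (‖z‖^2 - s^2)) D2 y := by
    have h := hinv.const_mul s
    simpa [div_eq_mul_inv, hD2def] using h
  -- derivative of second component
  obtain ⟨D3, hD3def⟩ : ∃ xx : E3 →L[ℝ] E3,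
    xx = (‖y‖^2 - s^2)⁻¹ • ContinuousLinearMap.id ℝ E3 + ninv.smulRight y := ⟨_, rfl⟩
  have h3 : HasFDerivAt (fun z : E3 => (‖z‖^2 - s^2)⁻¹ • z) D3 y := by
    have h := hinv.smul (hasFDerivAt_id y)
    rw [hD3def]; exact h
  obtain ⟨DG, hDGdef⟩ : ∃ xx : E3 →L[ℝ] (ℝ × E3), xx = D2.prod D3 := ⟨_, rfl⟩
  have hG : HasFDerivAt (fun z : E3 => (s / (‖z‖^2 - s^2), (‖z‖^2 - s^2)⁻¹ • z)) DG y := by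
    rw [hDGdef]; exact h2.prodMk h3
  -- norm bounds for DG
  have hyI : ‖y‖^2 - s^2 ≤ ‖y‖^2 := by nlinarith
  have hD2norm : ‖D2‖ ≤ 2 * ‖y‖^2 * ((‖y‖^2 - s^2)^2)⁻¹ := by
    have hsm := norm_smul s ninv
    rw [Real.norm_eq_abs] at hsm
    rw [hD2def, hsm]
    calc |s| * ‖ninv‖
      ≤ ‖y‖ * (((‖y‖^2 - s^2)^2)⁻¹ * (2 * ‖y‖)) := by
          apply mul_le_mul (by rw [abs_of_nonneg hs0]; linarith) hninv_norm
            (norm_nonneg _) (norm_nonneg _)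
      _ = 2 * ‖y‖^2 * ((‖y‖^2 - s^2)^2)⁻¹ := by ring
  have hD3norm : ‖D3‖ ≤ 3 * ‖y‖^2 * ((‖y‖^2 - s^2)^2)⁻¹ := by
    rw [hD3def]
    have ha : ‖(‖y‖^2 - s^2)⁻¹ • ContinuousLinearMap.id ℝ E3‖ ≤ (‖y‖^2 - s^2)⁻¹ := by
      have hsm := norm_smul ((‖y‖^2 - s^2)⁻¹) (ContinuousLinearMap.id ℝ E3)
      rw [Real.norm_eq_abs, abs_of_pos (show (0:ℝ) < (‖y‖^2 - s^2)⁻¹ by positivity)] at hsm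
      rw [hsm]
      calc (‖y‖^2 - s^2)⁻¹ * ‖ContinuousLinearMap.id ℝ E3‖
          ≤ (‖y‖^2 - s^2)⁻¹ * 1 :=
            mul_le_mul_of_nonneg_left (ContinuousLinearMap.norm_id_le) (by positivity)
        _ = (‖y‖^2 - s^2)⁻¹ := mul_one _
    have hb : ‖ninv.smulRight y‖ ≤ ((‖y‖^2 - s^2)^2)⁻¹ * (2 * ‖y‖) * ‖y‖ := by
      rw [ContinuousLinearMap.norm_smulRight_apply]
      exact mul_le_mul_of_nonneg_right hninv_norm (norm_nonneg y)
    have hinv_le : (‖y‖^2 - s^2)⁻¹ ≤ ‖y‖^2 * ((‖y‖^2 - s^2)^2)⁻¹ := by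
      rw [show ((‖y‖^2 - s^2)^2)⁻¹ = (‖y‖^2 - s^2)⁻¹ * (‖y‖^2 - s^2)⁻¹ by
        rw [sq, mul_inv]]
      have : (‖y‖^2 - s^2)⁻¹ * (‖y‖^2 - s^2) ≤ (‖y‖^2 - s^2)⁻¹ * ‖y‖^2 :=
        mul_le_mul_of_nonneg_left hyI (by positivity)
      calc (‖y‖^2 - s^2)⁻¹ = (‖y‖^2 - s^2)⁻¹ * (‖y‖^2 - s^2) * (‖y‖^2 - s^2)⁻¹ := by
            field_simp
        _ ≤ (‖y‖^2 - s^2)⁻¹ * ‖y‖^2 * (‖y‖^2 - s^2)⁻¹ :=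
            mul_le_mul_of_nonneg_right this (by positivity)
        _ = ‖y‖^2 * ((‖y‖^2 - s^2)⁻¹ * (‖y‖^2 - s^2)⁻¹) := by ring
    calc ‖(‖y‖^2 - s^2)⁻¹ • ContinuousLinearMap.id ℝ E3 + ninv.smulRight y‖
        ≤ (‖y‖^2 - s^2)⁻¹ + ((‖y‖^2 - s^2)^2)⁻¹ * (2 * ‖y‖) * ‖y‖ :=
          le_trans (norm_add_le _ _) (add_le_add ha hb)
      _ ≤ ‖y‖^2 * ((‖y‖^2 - s^2)^2)⁻¹ + ((‖y‖^2 - s^2)^2)⁻¹ * (2 * ‖y‖) * ‖y‖ := by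
          linarith [hinv_le]
      _ = 3 * ‖y‖^2 * ((‖y‖^2 - s^2)^2)⁻¹ := by ring
  have hDGnorm : ‖DG‖ ≤ 3 * ‖y‖^2 * ((‖y‖^2 - s^2)^2)⁻¹ := by
    rw [hDGdef, ContinuousLinearMap.opNorm_prod]
    rw [Prod.norm_def]
    have hiv : (0:ℝ) ≤ ((‖y‖^2 - s^2)^2)⁻¹ := by positivity
    exact max_le (le_trans hD2norm (by nlinarith [norm_nonneg y])) hD3norm
  -- the point z* and its lower bound
  obtain ⟨zs, hzs⟩ : ∃ xx : E3, xx = Lmap l1 (s / (‖y‖^2 - s^2), (‖y‖^2 - s^2)⁻¹ • y) := ⟨_, rfl⟩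
  have hzs_norm : (c0 * ‖y‖ * (‖y‖^2 - s^2)⁻¹)^2 ≤ ‖zs‖^2 := by
    have hz0 : zs 0 = ((‖y‖^2 - s^2)⁻¹ * y 0 - l1 * (s / (‖y‖^2 - s^2)))
        / Real.sqrt (1 - l1^2) := by
      rw [hzs, Lmap_apply]; simp
    have hz1 : zs 1 = (‖y‖^2 - s^2)⁻¹ * y 1 := by
      rw [hzs, Lmap_apply]; simp
    have hz2 : zs 2 = (‖y‖^2 - s^2)⁻¹ * y 2 := by
      rw [hzs, Lmap_apply]; simp
    have hnz : ‖zs‖^2 = (zs 0)^2 + (zs 1)^2 + (zs 2)^2 := by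
      rw [EuclideanSpace.norm_eq, Real.sq_sqrt (by positivity)]
      simp [Fin.sum_univ_three, Real.norm_eq_abs, sq_abs]
    have hny : ‖y‖^2 = (y 0)^2 + (y 1)^2 + (y 2)^2 := by
      rw [EuclideanSpace.norm_eq, Real.sq_sqrt (by positivity)]
      simp [Fin.sum_univ_three, Real.norm_eq_abs, sq_abs]
    -- key inequality
    have hkey : ((1 - |l1|)/2)^2 * ‖y‖^2 ≤ (y 0 - l1 * s)^2 + ((y 1)^2 + (y 2)^2) := by
      have := aux_quad_key (a := |l1|) (r := ‖y‖) (t := l1 * s) (y0 := y 0)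
        (b := (y 1)^2 + (y 2)^2) (abs_nonneg l1) hl (by positivity)
        (by rw [hny]; ring) (norm_nonneg y)
        (by rw [abs_mul, abs_of_nonneg hs0]
            exact mul_le_mul_of_nonneg_left (le_of_lt hys) (abs_nonneg l1))
      linarith
    -- relate (zs 0)^2 to the boosted coordinate
    have hz0sq : ((‖y‖^2 - s^2)⁻¹)^2 * (y 0 - l1 * s)^2 ≤ (zs 0)^2 := by
      rw [hz0]
      have hrw : ((‖y‖^2 - s^2)⁻¹ * y 0 - l1 * (s / (‖y‖^2 - s^2)))
          = (‖y‖^2 - s^2)⁻¹ * (y 0 - l1 * s) := by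
        field_simp
      rw [hrw, div_pow, mul_pow]
      rw [Real.sq_sqrt (le_of_lt h1l)]
      rw [le_div_iff₀ h1l]
      have hfact : ((‖y‖^2 - s^2)⁻¹)^2 * (y 0 - l1 * s)^2 * (1 - l1^2)
          ≤ ((‖y‖^2 - s^2)⁻¹)^2 * (y 0 - l1 * s)^2 * 1 := by
        apply mul_le_mul_of_nonneg_left (by nlinarith [sq_abs l1, abs_nonneg l1])
          (by positivity)
      linarith
    have hz12 : (zs 1)^2 + (zs 2)^2
        = ((‖y‖^2 - s^2)⁻¹)^2 * ((y 1)^2 + (y 2)^2) := by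
      rw [hz1, hz2]; ring
    have hfinal : (c0 * ‖y‖ * (‖y‖^2 - s^2)⁻¹)^2
        = ((‖y‖^2 - s^2)⁻¹)^2 * (((1 - |l1|)/2)^2 * ‖y‖^2) := by
      rw [hc0]; ring
    rw [hnz, hfinal]
    have := mul_le_mul_of_nonneg_left hkey
      (show (0:ℝ) ≤ ((‖y‖^2 - s^2)⁻¹)^2 by positivity)
    linarith [hz0sq, hz12, this]
  have hzs_pos : 0 < c0 * ‖y‖ * (‖y‖^2 - s^2)⁻¹ :=
    mul_pos (mul_pos hc0pos hr0) (by positivity)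
  -- bound on fderiv Q at zs
  obtain ⟨A, hA⟩ : ∃ xx : E3 →L[ℝ] ℝ, xx = fderiv ℝ Q zs := ⟨_, rfl⟩
  have hAbound : ‖A‖ ≤ K * ((‖y‖^2 - s^2)^2 / (c0 * ‖y‖)^2) := by
    have h1 : ‖zs‖^2 * ‖A‖ ≤ K := by
      have := hK zs
      rw [← hA] at this
      nlinarith [norm_nonneg zs, abs_nonneg (Q zs), mul_nonneg (norm_nonneg zs)
        (abs_nonneg (Q zs))]
    have h2 : (c0 * ‖y‖ * (‖y‖^2 - s^2)⁻¹)^2 * ‖A‖ ≤ K := by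
      calc (c0 * ‖y‖ * (‖y‖^2 - s^2)⁻¹)^2 * ‖A‖ ≤ ‖zs‖^2 * ‖A‖ :=
            mul_le_mul_of_nonneg_right hzs_norm (norm_nonneg A)
        _ ≤ K := h1
    have h3 : (0:ℝ) < (c0 * ‖y‖ * (‖y‖^2 - s^2)⁻¹)^2 := pow_pos hzs_pos 2
    have hrne : ‖y‖ ≠ 0 := ne_of_gt hr0
    rw [show K * ((‖y‖^2 - s^2)^2 / (c0 * ‖y‖)^2)
        = K / (c0 * ‖y‖ * (‖y‖^2 - s^2)⁻¹)^2 by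
      field_simp]
    rw [le_div_iff₀ h3]
    linarith [h2]
  -- the total derivative
  have hQdiff : HasFDerivAt Q A zs := by
    rw [hA]
    exact (hQ.differentiable (by simp) zs).hasFDerivAt
  have hcomp : HasFDerivAt (fun z : E3 =>
      Q (Lmap l1 (s / (‖z‖^2 - s^2), (‖z‖^2 - s^2)⁻¹ • z)))
      (A.comp ((Lmap l1).comp DG)) y := by
    have hLG : HasFDerivAt (fun z : E3 =>
        Lmap l1 (s / (‖z‖^2 - s^2), (‖z‖^2 - s^2)⁻¹ • z)) ((Lmap l1).comp DG) y :=
      ((Lmap l1).hasFDerivAt).comp y hG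
    exact (hzs ▸ hQdiff).comp y hLG
  have hfe : (fun z : E3 =>
      (fun (t : ℝ) (x : E3) =>
        Q ((EuclideanSpace.equiv (Fin 3) ℝ).symm (fun i =>
          if i = 0 then (x 0 - l1 * t) / Real.sqrt (1 - l1 ^ 2) else x i)))
        (s / (‖z‖ ^ 2 - s ^ 2)) ((‖z‖ ^ 2 - s ^ 2)⁻¹ • z))
      = fun z : E3 => Q (Lmap l1 (s / (‖z‖^2 - s^2), (‖z‖^2 - s^2)⁻¹ • z)) := by
    funext z
    show Q _ = Q _
    congr 1
    rw [Lmap_eq]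
  rw [hfe, hcomp.fderiv]
  -- final estimate
  have hBnd : ‖A.comp ((Lmap l1).comp DG)‖ ≤ ‖A‖ * (‖Lmap l1‖ * ‖DG‖) :=
    le_trans (ContinuousLinearMap.opNorm_comp_le _ _)
      (mul_le_mul_of_nonneg_left (ContinuousLinearMap.opNorm_comp_le _ _) (norm_nonneg A))
  have hstep : ‖A‖ * (‖Lmap l1‖ * ‖DG‖)
      ≤ (K * ((‖y‖^2 - s^2)^2 / (c0 * ‖y‖)^2)) * (CL * (3 * ‖y‖^2 * ((‖y‖^2 - s^2)^2)⁻¹)) := by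
    apply mul_le_mul hAbound _ (mul_nonneg (norm_nonneg _) (norm_nonneg _))
      (mul_nonneg hK0 (by positivity))
    apply mul_le_mul hLnorm hDGnorm (norm_nonneg _) (le_of_lt hCLpos)
  have hfin : (K * ((‖y‖^2 - s^2)^2 / (c0 * ‖y‖)^2)) * (CL * (3 * ‖y‖^2 * ((‖y‖^2 - s^2)^2)⁻¹))
      = 3 * CL / c0^2 * K := by
    have hrne : ‖y‖ ≠ 0 := ne_of_gt hr0
    field_simp
  linarith [hBnd, hstep, hfin.le, hfin.ge]
end
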